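/- arXiv:2004.00838 — 4 statements merged into one kernel-verified Lean document; each statement's English description precedes it below -/
import Mathlib

section
/- For every rhythm a ∈ R_N^n with 2 ≤ n ≤ N, the discrete average transformation Rav(a) again belongs to R_N^n; that is, Rav(a) has pairwise distinct entries and satisfies Σ_{i=0}^{n−1} (Rav(a)_{⟨i+1⟩_n} −_N Rav(a)_i) = N. -/
namespace Rhythm

/-- `a +_N b`, addition on `Z_N = {0,…,N−1}`. -/
def addN (N a b : ℕ) : ℕ := (a + b) % N

/-- `a −_N b`, subtraction on `Z_N = {0,…,N−1}`. -/
def subN (N a b : ℕ) : ℕ := (a + N - b) % N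

/-- The discrete average `av(a,b) = a +_N ⌊(b −_N a)/2⌋`. -/
def av (N a b : ℕ) : ℕ := addN N a (subN N b a / 2)

/-- The cyclic interval `[a,b]_{Z_N}`. -/
def cyclicIcc (N a b : ℕ) : Finset ℕ :=
  if a ≤ b then Finset.Icc a b else Finset.Icc a (N - 1) ∪ Finset.Icc 0 b

/-- The half-open cyclic interval `[a,b)_{Z_N} = [a,b]_{Z_N} \ {b}`. -/
def cyclicIco (N a b : ℕ) : Finset ℕ := (cyclicIcc N a b).erase b

/-- The half-open cyclic interval `(a,b]_{Z_N} = [a,b]_{Z_N} \ {a}`. -/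
def cyclicIoc (N a b : ℕ) : Finset ℕ := (cyclicIcc N a b).erase a

/-- Cyclic successor `⟨i+1⟩_n` on `Fin n`. -/
def csucc {n : ℕ} (i : Fin n) : Fin n := ⟨(i.val + 1) % n, Nat.mod_lt _ i.pos⟩

/-- Cyclic predecessor `⟨i−1⟩_n` on `Fin n`. -/
def cpred {n : ℕ} (i : Fin n) : Fin n := ⟨(i.val + (n - 1)) % n, Nat.mod_lt _ i.pos⟩

/-- `a ∈ R_N^n`: entries in `Z_N`, pairwise distinct, and `Σ_i (a_{⟨i+1⟩_n} −_N a_i) = N`. -/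
def IsRhythm (N : ℕ) {n : ℕ} (a : Fin n → ℕ) : Prop :=
  (∀ i, a i < N) ∧ Function.Injective a ∧ (∑ i, subN N (a (csucc i)) (a i)) = N

/-- The discrete average transformation `Rav`. -/
def Rav (N : ℕ) {n : ℕ} (a : Fin n → ℕ) : Fin n → ℕ := fun i => av N (a i) (a (csucc i))

/-- The rotation `rot(a_0,…,a_{n−1}) = (a_{n−1},a_0,…,a_{n−2})`. -/
def rot {n : ℕ} (a : Fin n → ℕ) : Fin n → ℕ := fun i => a (cpred i)

/-- The translation `tr(a_0,…,a_{n−1}) = (a_0 +_N 1,…,a_{n−1} +_N 1)`. -/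
def tr (N : ℕ) {n : ℕ} (a : Fin n → ℕ) : Fin n → ℕ := fun i => addN N (a i) 1

/-- `j` is the jumping number of `a`: `a_{⟨j−1⟩_n} > a_j` and `a_{⟨k−1⟩_n} < a_k` for `k ≠ j`. -/
def IsJump {n : ℕ} (a : Fin n → ℕ) (j : Fin n) : Prop :=
  a (cpred j) > a j ∧ ∀ k, k ≠ j → a (cpred k) < a k

/-- The map `Iav`: for `n ≥ 2` it is `Rav` if `a` is proper (`N − a_{n−1} > a_0`) and
`rot ∘ Rav` otherwise; for `n ≤ 1` it is the identity. -/
def Iav (N : ℕ) {n : ℕ} (a : Fin n → ℕ) : Fin n → ℕ :=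
  if h : 2 ≤ n then
    if N - a ⟨n - 1, by omega⟩ > a ⟨0, by omega⟩ then Rav N a else rot (Rav N a)
  else a

/-- The support of a Boolean vector `v ∈ F_2^N`. -/
def supp (N : ℕ) (v : Fin N → ZMod 2) : Finset (Fin N) :=
  Finset.univ.filter fun i => v i = 1

/-- `BtoI(v)`: the increasing enumeration of the support of `v`. -/
def BtoI (N : ℕ) (v : Fin N → ZMod 2) : Fin (supp N v).card → ℕ :=
  fun i => (((supp N v).orderIsoOfFin rfl) i).1.val

/-- `ItoB(b)`: the characteristic vector of the set of entries of the tuple `b`. -/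
def ItoB (N : ℕ) {n : ℕ} (b : Fin n → ℕ) : Fin N → ZMod 2 :=
  fun i => if ∃ k, b k = i.val then 1 else 0

/-- The Boolean average `Bav = ItoB ∘ Iav ∘ BtoI : B_N → B_N`. -/
def Bav (N : ℕ) (v : Fin N → ZMod 2) : Fin N → ZMod 2 :=
  ItoB N (Iav N (BtoI N v))

/-- The cyclic shift `Btr(v_0,…,v_{N−1}) = (v_{N−1},v_0,…,v_{N−2})`. -/
def Btr (N : ℕ) (v : Fin N → ZMod 2) : Fin N → ZMod 2 := fun i => v (cpred i)

/-- `Par_N`: the set of parental pairs of zero, i.e. pairs `(a,b) ∈ Z_N × Z_N` with `av(a,b) = 0`. -/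
def Par (N : ℕ) : Finset (ℕ × ℕ) :=
  (Finset.range N ×ˢ Finset.range N).filter fun p => av N p.1 p.2 = 0

/-- The least absolute remainder `φ_N(i) ∈ Z_{N,±}` of `i ∈ Z_N`. -/
def toSigned (N : ℕ) (i : Fin N) : ℤ :=
  if (i : ℕ) ≤ N / 2 then (i : ℤ) else (i : ℤ) - N

/-- `G_N(y) = Bav_N^0(v)` where `v_{⟨j⟩_N} = 1 + y_j` for `j ∈ Z_{N,±}`. -/
def G (N : ℕ) (y : ℤ → ZMod 2) : ZMod 2 :=
  if h : 0 < N then Bav N (fun i => 1 + y (toSigned N i)) ⟨0, h⟩ else 0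

end Rhythm

/-!
Write `d_i = a_{⟨i+1⟩_n} −_N a_i` for the gaps of a tuple. For a rhythm the gaps are positive
(its entries are distinct) and sum to `N`. Conversely, a tuple in `Z_N` with positive gaps summing
to `N` has distinct entries: modulo `N` its entries are `a_0` plus the partial sums of the gaps,
which increase strictly and stay below `N`. The gaps of `Rav(a)` are `⌈d_i/2⌉ + ⌊d_{i+1}/2⌋`,
again positive, and the halves telescope so that the total is still `N`.
-/

namespace Rhythm

open Finset Fin.NatCast

variable {N n : ℕ}

lemma natCast_addN (x y : ℕ) : ((addN N x y : ℕ) : ZMod N) = x + y := by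
  simp [addN, ZMod.natCast_mod]

lemma natCast_subN {y : ℕ} (hy : y ≤ N) (x : ℕ) : ((subN N x y : ℕ) : ZMod N) = x - y := by
  rw [subN, ZMod.natCast_mod, Nat.cast_sub (by omega)]
  simp

lemma eq_of_natCast_eq {x y : ℕ} (hx : x < N) (hy : y < N) (h : (x : ZMod N) = y) : x = y := by
  rwa [ZMod.natCast_eq_natCast_iff', Nat.mod_eq_of_lt hx, Nat.mod_eq_of_lt hy] at h

lemma csucc_ne_self (hn : 2 ≤ n) (i : Fin n) : csucc i ≠ i := by
  intro h
  have hi := i.isLt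
  have hval : (i.val + 1) % n = i.val := congrArg Fin.val h
  rcases Nat.lt_or_ge (i.val + 1) n with hlt | hge
  · rw [Nat.mod_eq_of_lt hlt] at hval
    omega
  · rw [show i.val + 1 = n by omega, Nat.mod_self] at hval
    omega

lemma csucc_eq_add_one [NeZero n] (i : Fin n) : csucc i = i + 1 :=
  Fin.ext (by simp [csucc, Fin.val_add])

lemma sum_comp_csucc [NeZero n] {M : Type*} [AddCommMonoid M] (f : Fin n → M) :
    ∑ i, f (csucc i) = ∑ i, f i := by
  simp only [csucc_eq_add_one]
  exact Fintype.sum_equiv (Equiv.addRight 1) _ _ fun _ => rfl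

def gap (N : ℕ) (a : Fin n → ℕ) (i : Fin n) : ℕ := subN N (a (csucc i)) (a i)

lemma gap_lt (hN : 0 < N) (a : Fin n → ℕ) (i : Fin n) : gap N a i < N := Nat.mod_lt _ hN

lemma natCast_gap {a : Fin n → ℕ} (ha : ∀ i, a i ≤ N) (i : Fin n) :
    (gap N a i : ZMod N) = a (csucc i) - a i :=
  natCast_subN (ha i) _

lemma IsRhythm.gap_pos {a : Fin n → ℕ} (ha : IsRhythm N a) (hn : 2 ≤ n) (i : Fin n) :
    0 < gap N a i := by
  obtain ⟨hlt, hinj, -⟩ := ha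
  by_contra! hzero
  have hcast : (a (csucc i) : ZMod N) = a i := by
    rw [← sub_eq_zero, ← natCast_gap (fun j => (hlt j).le), Nat.le_zero.mp hzero, Nat.cast_zero]
  exact csucc_ne_self hn i (hinj (eq_of_natCast_eq (hlt _) (hlt _) hcast))

lemma natCast_apply_eq_add_sum_gap [NeZero n] {b : Fin n → ℕ} (hb : ∀ i, b i ≤ N) (k : ℕ) :
    (b k : ZMod N) = b 0 + ((∑ j ∈ range k, gap N b j : ℕ) : ZMod N) := by
  induction k with
  | zero => simp
  | succ k ih =>
    have hstep : (b (k + 1 : ℕ) : ZMod N) = b k + gap N b k := by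
      rw [natCast_gap hb, csucc_eq_add_one, Nat.cast_succ]
      ring
    rw [hstep, ih, sum_range_succ, Nat.cast_add]
    ring

lemma injective_of_gap_pos {b : Fin n → ℕ} (hb : ∀ i, b i < N) (hpos : ∀ i, 0 < gap N b i)
    (hsum : ∑ i, gap N b i = N) : Function.Injective b := by
  intro i j hij
  have : NeZero n := ⟨i.pos.ne'⟩
  set P : ℕ → ℕ := fun k => ∑ j ∈ range k, gap N b j
  have hP_mono : StrictMono P :=
    strictMono_nat_of_lt_succ fun k => by simp [P, sum_range_succ, hpos]
  have hP_lt : ∀ k < n, P k < N := by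
    intro k hk
    calc P k < P n := hP_mono hk
      _ = N := by simp [P, ← Fin.sum_univ_eq_sum_range, hsum]
  have hP_cast : (P i : ZMod N) = P j := by
    have hi := natCast_apply_eq_add_sum_gap (fun k => (hb k).le) i
    have hj := natCast_apply_eq_add_sum_gap (fun k => (hb k).le) j
    simp only [Fin.cast_val_eq_self] at hi hj
    exact add_left_cancel (hi.symm.trans (hij ▸ hj))
  exact Fin.ext (hP_mono.injective (eq_of_natCast_eq (hP_lt _ i.isLt) (hP_lt _ j.isLt) hP_cast))

lemma gap_Rav {a : Fin n → ℕ} (ha : ∀ i, a i < N) (i : Fin n) :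
    gap N (Rav N a) i = gap N a i - gap N a i / 2 + gap N a (csucc i) / 2 := by
  have hN : 0 < N := Nat.zero_lt_of_lt (ha i)
  have hRav_lt : ∀ j, Rav N a j < N := fun j => Nat.mod_lt _ hN
  have hRav_cast : ∀ j, (Rav N a j : ZMod N) = a j + ((gap N a j / 2 : ℕ) : ZMod N) :=
    fun j => natCast_addN _ _
  have hd := gap_lt hN a i
  have hd' := gap_lt hN a (csucc i)
  apply eq_of_natCast_eq (gap_lt hN _ i) (by omega)
  rw [natCast_gap (fun j => (hRav_lt j).le), hRav_cast, hRav_cast, Nat.cast_add,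
    Nat.cast_sub (Nat.div_le_self _ _), natCast_gap (fun j => (ha j).le)]
  ring

lemma sum_gap_Rav [NeZero n] {a : Fin n → ℕ} (ha : ∀ i, a i < N) :
    ∑ i, gap N (Rav N a) i = ∑ i, gap N a i := by
  simp only [gap_Rav ha, sum_add_distrib, sum_comp_csucc fun i => gap N a i / 2]
  rw [← sum_add_distrib]
  exact sum_congr rfl fun i _ => Nat.sub_add_cancel (Nat.div_le_self _ _)

theorem IsRhythm.rav {a : Fin n → ℕ} (ha : IsRhythm N a) (hn : 2 ≤ n) :
    IsRhythm N (Rav N a) := by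
  have : NeZero n := ⟨by omega⟩
  have hN : 0 < N := Nat.zero_lt_of_lt (ha.1 0)
  have hRav_lt : ∀ i, Rav N a i < N := fun i => Nat.mod_lt _ hN
  have hsum : ∑ i, gap N (Rav N a) i = N := (sum_gap_Rav ha.1).trans ha.2.2
  have hpos : ∀ i, 0 < gap N (Rav N a) i := fun i => by
    have := ha.gap_pos hn i
    rw [gap_Rav ha.1]
    omega
  exact ⟨hRav_lt, injective_of_gap_pos hRav_lt hpos hsum, hsum⟩

end Rhythm

open Rhythm in
theorem Rav_mem_rhythms_general (N : ℕ) (n : ℕ) (hn : 2 ≤ n)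
    (a : Fin n → ℕ) (ha : IsRhythm N a) :
    IsRhythm N (Rav N a) :=
  ha.rav hn

open Rhythm in
/-- For every rhythm `a ∈ R_N^n` with `2 ≤ n ≤ N`, the discrete average transformation
`Rav(a)` again belongs to `R_N^n`: it has entries in `Z_N`, pairwise distinct entries, and
satisfies `Σ_{i=0}^{n−1} (Rav(a)_{⟨i+1⟩_n} −_N Rav(a)_i) = N`. -/
theorem Rav_mem_rhythms (N : ℕ) (hN : 3 ≤ N) (n : ℕ) (hn : 2 ≤ n) (hnN : n ≤ N)
    (a : Fin n → ℕ) (ha : IsRhythm N a) :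
    IsRhythm N (Rav N a) :=
  Rav_mem_rhythms_general N n hn a ha
end

section
/- For every rhythm a ∈ R_N^n with n ≥ 2, the tuple pr_I(a) = rot^{⟨n − j(a)⟩_n}(a) is strictly increasing, i.e. pr_I(a) ∈ I_N^n; moreover, if a ∈ I_N^n then pr_I(a) = a. -/
open Rhythm in
lemma Rhythm.cpred_iter {n : ℕ} (k : ℕ) (i : Fin n) :
    cpred^[k] i = ⟨(i.val + k * (n - 1)) % n, Nat.mod_lt _ i.pos⟩ := by
  induction k with
  | zero => simp [Nat.mod_eq_of_lt i.isLt]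
  | succ k ih =>
      rw [Function.iterate_succ_apply', ih]
      apply Fin.ext
      show ((i.val + k * (n-1)) % n + (n-1)) % n = (i.val + (k+1) * (n-1)) % n
      rw [Nat.mod_add_mod]
      ring_nf

open Rhythm in
lemma Rhythm.rot_iter {n : ℕ} (a : Fin n → ℕ) (k : ℕ) (i : Fin n) :
    (rot^[k] a) i = a (cpred^[k] i) := by
  induction k generalizing a with
  | zero => rfl
  | succ k ih =>
      rw [Function.iterate_succ_apply, ih, Function.iterate_succ_apply']
      rfl

lemma Rhythm.key_mod (n j i : ℕ) (hn : 0 < n) (hj : j < n) :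
    (i + (n - j) % n * (n - 1)) % n = (i + j) % n := by
  rcases Nat.eq_zero_or_pos j with rfl | hj0
  · simp
  · rw [Nat.mod_eq_of_lt (by omega : n - j < n)]
    obtain ⟨m, rfl⟩ : ∃ m, n = j + (m + 1) := ⟨n - j - 1, by omega⟩
    rw [show j + (m+1) - j = m + 1 from by omega,
        show j + (m+1) - 1 = j + m from by omega,
        show i + (m+1) * (j+m) = (i+j) + m * (j + (m+1)) from by ring,
        Nat.add_mul_mod_self_right]


open Rhythm in
/-- For every rhythm `a ∈ R_N^n` with `n ≥ 2`, the tuple `pr_I(a) = rot^{⟨n − j(a)⟩_n}(a)`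
is strictly increasing, i.e. `pr_I(a) ∈ I_N^n`; moreover, if `a ∈ I_N^n` then `pr_I(a) = a`. -/
theorem prI_increasing (N : ℕ) (hN : 3 ≤ N) (n : ℕ) (hn : 2 ≤ n) (hnN : n ≤ N)
    (a : Fin n → ℕ) (ha : IsRhythm N a) (j : Fin n) (hj : IsJump a j) :
    StrictMono (rot^[(n - j.val) % n] a) ∧
    (StrictMono a → rot^[(n - j.val) % n] a = a) := by
  have hn0 : 0 < n := by omega
  have hb : ∀ i : Fin n, (rot^[(n - j.val) % n] a) i
      = a ⟨(i.val + j.val) % n, Nat.mod_lt _ hn0⟩ := by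
    intro i
    rw [Rhythm.rot_iter, Rhythm.cpred_iter]
    congr 1
    exact Fin.ext (Rhythm.key_mod n j.val i.val hn0 j.isLt)
  constructor
  · obtain ⟨m, rfl⟩ : ∃ m, n = m + 1 := ⟨n - 1, by omega⟩
    rw [Fin.strictMono_iff_lt_succ]
    intro i
    rw [hb, hb]
    have hiv : (i.castSucc : Fin (m+1)).val = i.val := rfl
    have hsv : (i.succ : Fin (m+1)).val = i.val + 1 := rfl
    rw [hiv, hsv]
    set K : Fin (m+1) := ⟨(i.val + 1 + j.val) % (m+1), Nat.mod_lt _ hn0⟩ with hK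
    have hKne : K ≠ j := by
      intro hKe
      have hv : (i.val + 1 + j.val) % (m+1) = j.val := congrArg Fin.val hKe
      have hi1 : i.val + 1 < m + 1 := by omega
      rcases lt_or_ge (i.val + 1 + j.val) (m+1) with h | h
      · rw [Nat.mod_eq_of_lt h] at hv; omega
      · rw [Nat.mod_eq_sub_mod h, Nat.mod_eq_of_lt (by omega)] at hv; omega
    have hcp : cpred K = ⟨(i.val + j.val) % (m+1), Nat.mod_lt _ hn0⟩ := by
      apply Fin.ext
      show ((i.val + 1 + j.val) % (m+1) + (m+1-1)) % (m+1) = (i.val + j.val) % (m+1)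
      rw [Nat.mod_add_mod, show i.val + 1 + j.val + (m+1-1) = (i.val + j.val) + (m+1) from by omega,
          Nat.add_mod_right]
    have := hj.2 K hKne
    rw [hcp] at this
    exact this
  · intro hsm
    have hj0 : j.val = 0 := by
      by_contra h0
      have : cpred j < j := by
        apply Fin.lt_def.mpr
        show (j.val + (n-1)) % n < j.val
        rw [show j.val + (n-1) = (j.val - 1) + n from by omega, Nat.add_mod_right,
            Nat.mod_eq_of_lt (by omega)]
        omega
      exact absurd (hsm this) (not_lt.mpr (le_of_lt hj.1))
    rw [hj0, Nat.sub_zero, Nat.mod_self, Function.iterate_zero, id]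
end

section
/- The Boolean average commutes with the cyclic shift: Bav(Btr(v)) = Btr(Bav(v)) for every v ∈ B_N = F_2^N, where Btr(v_0, v_1, …, v_{N−1}) = (v_{N−1}, v_0, …, v_{N−2}). -/
/-! Shifting `v` by `Btr` adds `1` (mod `N`) to every element of its support. So the increasing
enumeration of the new support is `tr` of the old one, followed by `rot` when `N - 1` was in the
support (it wraps around to `0` and becomes the smallest element). Since `av` is equivariant under
translation, `Rav` commutes with `tr` and with `rot`; and `Bav` only sees the set of entries of
`Iav`, which is that of `Rav` because `rot` merely permutes entries. -/

namespace Rhythm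

variable {N n : ℕ}

theorem mod_eq_ite_of_lt_two_mul {x : ℕ} (hx : x < 2 * N) :
    x % N = if x < N then x else x - N := by
  split_ifs with h
  · exact Nat.mod_eq_of_lt h
  · rw [Nat.mod_eq_sub_mod (by omega), Nat.mod_eq_of_lt (by omega)]

theorem cpred_csucc (i : Fin n) : cpred (csucc i) = i := by
  have := i.isLt
  ext
  rw [cpred, csucc, Fin.val_mk, Fin.val_mk, Nat.mod_add_mod,
    show i.val + 1 + (n - 1) = i.val + n by omega, Nat.add_mod_right, Nat.mod_eq_of_lt i.isLt]

theorem csucc_cpred (i : Fin n) : csucc (cpred i) = i := by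
  have := i.isLt
  ext
  rw [cpred, csucc, Fin.val_mk, Fin.val_mk, Nat.mod_add_mod,
    show i.val + (n - 1) + 1 = i.val + n by omega, Nat.add_mod_right, Nat.mod_eq_of_lt i.isLt]

theorem csucc_eq_iff {i j : Fin n} : csucc i = j ↔ i = cpred j :=
  ⟨fun h => h ▸ (cpred_csucc i).symm, fun h => h ▸ csucc_cpred j⟩

theorem cpred_surjective : Function.Surjective (cpred (n := n)) :=
  fun i => ⟨csucc i, cpred_csucc i⟩

theorem val_cpred (i : Fin n) : (cpred i).val = if i.val = 0 then n - 1 else i.val - 1 := by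
  have := i.isLt
  rw [cpred, Fin.val_mk, mod_eq_ite_of_lt_two_mul (by omega)]
  split_ifs <;> omega

theorem subN_eq_ite {a b : ℕ} (ha : a < N) (hb : b < N) :
    subN N a b = if b ≤ a then a - b else a + N - b := by
  rw [subN, mod_eq_ite_of_lt_two_mul (by omega)]
  split_ifs <;> omega

theorem subN_add_one_mod {a b : ℕ} (ha : a < N) (hb : b < N) :
    subN N ((a + 1) % N) ((b + 1) % N) = subN N a b := by
  rw [mod_eq_ite_of_lt_two_mul (x := a + 1) (by omega),
    mod_eq_ite_of_lt_two_mul (x := b + 1) (by omega)]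
  split_ifs <;> rw [subN_eq_ite (by omega) (by omega), subN_eq_ite ha hb] <;> split_ifs <;> omega

theorem av_add_one_mod {a b : ℕ} (ha : a < N) (hb : b < N) :
    av N ((a + 1) % N) ((b + 1) % N) = (av N a b + 1) % N := by
  rw [av, av, addN, addN, subN_add_one_mod hb ha, Nat.mod_add_mod, Nat.mod_add_mod,
    add_right_comm]

theorem Rav_tr {a : Fin n → ℕ} (ha : ∀ i, a i < N) :
    Rav N (tr N a) = tr N (Rav N a) :=
  funext fun _ => av_add_one_mod (ha _) (ha _)

theorem Rav_rot (a : Fin n → ℕ) : Rav N (rot a) = rot (Rav N a) := by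
  funext i
  simp only [Rav, rot, cpred_csucc, csucc_cpred]

theorem Rav_comp_cast {m : ℕ} (h : m = n) (a : Fin n → ℕ) :
    Rav N (a ∘ Fin.cast h) = Rav N a ∘ Fin.cast h := by
  subst h
  rfl

theorem range_rot (a : Fin n → ℕ) : Set.range (rot a) = Set.range a :=
  cpred_surjective.range_comp a

theorem range_Iav (hn : 2 ≤ n) (a : Fin n → ℕ) :
    Set.range (Iav N a) = Set.range (Rav N a) := by
  rw [Iav, dif_pos hn]
  split_ifs
  · rfl
  · exact range_rot _

theorem strictMono_tr {a : Fin n → ℕ} (ha : StrictMono a) (hlt : ∀ i, a i + 1 < N) :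
    StrictMono (tr N a) := by
  intro i j hij
  simp only [tr, addN, Nat.mod_eq_of_lt (hlt _)]
  exact Nat.succ_lt_succ (ha hij)

theorem strictMono_rot_tr {a : Fin n → ℕ} (ha : StrictMono a) (hn : 0 < n)
    (hlast : a ⟨n - 1, by omega⟩ = N - 1) : StrictMono (rot (tr N a)) := by
  have hlt : ∀ i : Fin n, i.val < n - 1 → a i + 1 < N := fun i hi => by
    have := ha (show i < ⟨n - 1, by omega⟩ from hi)
    omega
  intro i j hij
  rw [Fin.lt_def] at hij
  have hj : (cpred j).val = j.val - 1 := by rw [val_cpred, if_neg (by omega)]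
  have htr_j : tr N a (cpred j) = a (cpred j) + 1 := Nat.mod_eq_of_lt (hlt _ (by omega))
  have hN : 1 ≤ N := by have := hlt (cpred j) (by omega); omega
  simp only [rot]
  by_cases hi : i.val = 0
  · have : cpred i = ⟨n - 1, by omega⟩ := Fin.ext (by rw [val_cpred, if_pos hi])
    rw [this, htr_j, tr, addN, hlast, Nat.sub_add_cancel hN, Nat.mod_self]
    omega
  · have hi' : (cpred i).val = i.val - 1 := by rw [val_cpred, if_neg hi]
    have htr_i : tr N a (cpred i) = a (cpred i) + 1 := Nat.mod_eq_of_lt (hlt _ (by omega))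
    rw [htr_i, htr_j]
    exact Nat.succ_lt_succ (ha (by rw [Fin.lt_def]; omega))

theorem mem_supp {v : Fin N → ZMod 2} {i : Fin N} : i ∈ supp N v ↔ v i = 1 := by
  simp [supp]

theorem Btr_csucc (v : Fin N → ZMod 2) (i : Fin N) : Btr N v (csucc i) = v i :=
  congrArg v (cpred_csucc i)

theorem card_supp_Btr (v : Fin N → ZMod 2) : (supp N (Btr N v)).card = (supp N v).card :=
  Finset.card_nbij' cpred csucc (fun _ hi => by simpa [mem_supp, Btr] using hi)
    (fun _ hi => by simpa [mem_supp, Btr_csucc] using hi)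
    (fun i _ => csucc_cpred i) (fun i _ => cpred_csucc i)

theorem BtoI_lt (v : Fin N → ZMod 2) (k : Fin (supp N v).card) : BtoI N v k < N :=
  Fin.isLt _

theorem BtoI_strictMono (v : Fin N → ZMod 2) : StrictMono (BtoI N v) :=
  fun _ _ h => ((supp N v).orderIsoOfFin rfl).strictMono h

theorem apply_BtoI (v : Fin N → ZMod 2) (k : Fin (supp N v).card) :
    v ⟨BtoI N v k, BtoI_lt v k⟩ = 1 :=
  mem_supp.1 ((supp N v).orderIsoOfFin rfl k).2

theorem exists_BtoI_eq_iff (v : Fin N → ZMod 2) (i : Fin N) :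
    (∃ k, BtoI N v k = i.val) ↔ v i = 1 := by
  rw [← mem_supp]
  constructor
  · rintro ⟨k, hk⟩
    exact Fin.ext hk ▸ ((supp N v).orderIsoOfFin rfl k).2
  · intro hi
    obtain ⟨k, hk⟩ := ((supp N v).orderIsoOfFin rfl).surjective ⟨i, hi⟩
    exact ⟨k, by rw [BtoI, hk]⟩

theorem pos_of_card_supp_pos {v : Fin N → ZMod 2} (hn : 0 < (supp N v).card) : 0 < N :=
  Nat.zero_lt_of_lt (BtoI_lt v ⟨0, hn⟩)

theorem BtoI_eq_of_strictMono {v : Fin N → ZMod 2} {b : Fin (supp N v).card → ℕ}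
    (hb : StrictMono b) (hlt : ∀ k, b k < N) (hv : ∀ k, v ⟨b k, hlt k⟩ = 1) :
    BtoI N v = b := by
  have h := Finset.orderEmbOfFin_unique (s := supp N v) rfl (f := fun k => ⟨b k, hlt k⟩)
    (fun k => mem_supp.2 (hv k)) hb
  funext k
  rw [BtoI, Finset.coe_orderIsoOfFin_apply, ← h]

theorem BtoI_Btr_of_lt {v : Fin N → ZMod 2} (hn : 0 < (supp N v).card)
    (hlast : BtoI N v ⟨(supp N v).card - 1, by omega⟩ + 1 < N) :
    BtoI N (Btr N v) = tr N (BtoI N v) ∘ Fin.cast (card_supp_Btr v) := by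
  have hlt (k : Fin (supp N v).card) : BtoI N v k + 1 < N := by
    have := (BtoI_strictMono v).monotone
      (show k ≤ ⟨(supp N v).card - 1, by omega⟩ from Fin.le_def.2 (Nat.le_sub_one_of_lt k.isLt))
    exact lt_of_le_of_lt (Nat.succ_le_succ this) hlast
  refine BtoI_eq_of_strictMono
    ((strictMono_tr (BtoI_strictMono v) hlt).comp (Fin.cast_strictMono _))
    (fun _ => Nat.mod_lt _ (pos_of_card_supp_pos hn)) (fun _ => ?_)
  exact (Btr_csucc v _).trans (apply_BtoI v _)

theorem BtoI_Btr_of_eq {v : Fin N → ZMod 2} (hn : 0 < (supp N v).card)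
    (hlast : BtoI N v ⟨(supp N v).card - 1, by omega⟩ = N - 1) :
    BtoI N (Btr N v) = rot (tr N (BtoI N v)) ∘ Fin.cast (card_supp_Btr v) := by
  refine BtoI_eq_of_strictMono
    ((strictMono_rot_tr (BtoI_strictMono v) hn hlast).comp (Fin.cast_strictMono _))
    (fun _ => Nat.mod_lt _ (pos_of_card_supp_pos hn)) (fun _ => ?_)
  exact (Btr_csucc v _).trans (apply_BtoI v _)

theorem range_Rav_BtoI_Btr {v : Fin N → ZMod 2} (hn : 0 < (supp N v).card) :
    Set.range (Rav N (BtoI N (Btr N v))) = Set.range (tr N (Rav N (BtoI N v))) := by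
  have hcast : Function.Surjective (Fin.cast (card_supp_Btr v)) :=
    (finCongr (card_supp_Btr v)).surjective
  rcases Nat.lt_or_ge (BtoI N v ⟨(supp N v).card - 1, by omega⟩ + 1) N with hlast | hlast
  · rw [BtoI_Btr_of_lt hn hlast, Rav_comp_cast, hcast.range_comp, Rav_tr (BtoI_lt v)]
  · have hlast : BtoI N v ⟨(supp N v).card - 1, by omega⟩ = N - 1 := by
      have := BtoI_lt v ⟨(supp N v).card - 1, by omega⟩
      omega
    rw [BtoI_Btr_of_eq hn hlast, Rav_comp_cast, hcast.range_comp, Rav_rot, range_rot,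
      Rav_tr (BtoI_lt v)]

theorem ItoB_eq_of_range_eq {m : ℕ} {b : Fin n → ℕ} {c : Fin m → ℕ}
    (h : Set.range b = Set.range c) : ItoB N b = ItoB N c := by
  funext i
  simp only [ItoB, ← Set.mem_range, h]

theorem ItoB_tr {b : Fin n → ℕ} (hb : ∀ k, b k < N) :
    ItoB N (tr N b) = Btr N (ItoB N b) := by
  funext i
  have key : ∀ k, tr N b k = i.val ↔ b k = (cpred i).val := fun k =>
    (Fin.ext_iff (a := csucc ⟨b k, hb k⟩)).symm.trans (csucc_eq_iff.trans Fin.ext_iff)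
  simp only [ItoB, Btr, key]

theorem ItoB_BtoI (v : Fin N → ZMod 2) : ItoB N (BtoI N v) = v := by
  funext i
  have h01 : ∀ x : ZMod 2, ¬x = 1 → 0 = x := by decide
  simp only [ItoB, exists_BtoI_eq_iff]
  split_ifs with h
  · exact h.symm
  · exact h01 _ h

theorem Bav_of_card_lt_two {v : Fin N → ZMod 2} (hv : (supp N v).card < 2) : Bav N v = v := by
  rw [Bav, Iav, dif_neg (by omega), ItoB_BtoI]

theorem Bav_eq_ItoB_Rav {v : Fin N → ZMod 2} (hv : 2 ≤ (supp N v).card) :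
    Bav N v = ItoB N (Rav N (BtoI N v)) :=
  ItoB_eq_of_range_eq (range_Iav hv _)

end Rhythm

open Rhythm in
theorem Bav_comm_Btr_general (N : ℕ) (v : Fin N → ZMod 2) :
    Bav N (Btr N v) = Btr N (Bav N v) := by
  by_cases hv : 2 ≤ (supp N v).card
  · have hN : 0 < N := pos_of_card_supp_pos (by omega : 0 < (supp N v).card)
    rw [Bav_eq_ItoB_Rav (by rwa [card_supp_Btr]), Bav_eq_ItoB_Rav hv,
      ← ItoB_tr (b := Rav N (BtoI N v)) (fun _ => Nat.mod_lt _ hN)]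
    exact ItoB_eq_of_range_eq (range_Rav_BtoI_Btr (by omega))
  · rw [Bav_of_card_lt_two (by rw [card_supp_Btr]; omega), Bav_of_card_lt_two (by omega)]

open Rhythm in
/-- The Boolean average commutes with the cyclic shift: `Bav(Btr(v)) = Btr(Bav(v))` for
every `v ∈ B_N = F_2^N`. -/
theorem Bav_comm_Btr (N : ℕ) (hN : 3 ≤ N) (v : Fin N → ZMod 2) :
    Bav N (Btr N v) = Btr N (Bav N v) :=
  Bav_comm_Btr_general N v
end

section
/- Let a, b ∈ Z_N. Then: (0) if a = 0, then av(a,b) = 0 if and only if b ∈ {0,1}; (1) if a = 1, then av(a,b) ≠ 0 for every b ∈ Z_N; (2) if a ≥ 2, then av(a,b) = 0 if and only if a > b and a + b ≡ 0 or 1 (mod N). -/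
open Rhythm in
/-- Let `a, b ∈ Z_N`. Then: (0) if `a = 0`, then `av(a,b) = 0` iff `b ∈ {0,1}`;
(1) if `a = 1`, then `av(a,b) ≠ 0`; (2) if `a ≥ 2`, then `av(a,b) = 0` iff `a > b` and
`a + b ≡ 0` or `1 (mod N)`. -/
theorem parental_pair_characterization (N : ℕ) (hN : 3 ≤ N) (a b : ℕ)
    (ha : a < N) (hb : b < N) :
    (a = 0 → (av N a b = 0 ↔ b = 0 ∨ b = 1)) ∧
    (a = 1 → av N a b ≠ 0) ∧
    (2 ≤ a → (av N a b = 0 ↔ b < a ∧ ((a + b) % N = 0 ∨ (a + b) % N = 1))) := by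
  unfold Rhythm.av Rhythm.addN Rhythm.subN
  rcases le_or_gt a b with h | h
  · have h1 : (b + N - a) % N = b - a := by
      have : b + N - a = (b - a) + N := by omega
      rw [this, Nat.add_mod_right, Nat.mod_eq_of_lt (by omega)]
    rw [h1, Nat.mod_eq_of_lt (by omega)]
    have hab : (a + b) % N = if a + b < N then a + b else a + b - N := by
      split
      · exact Nat.mod_eq_of_lt (by omega)
      · rw [Nat.mod_eq_sub_mod (by omega), Nat.mod_eq_of_lt (by omega)]
    split at hab <;> omega
  · have h1 : (b + N - a) % N = b + N - a := Nat.mod_eq_of_lt (by omega)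
    rw [h1]
    have hab : (a + b) % N = if a + b < N then a + b else a + b - N := by
      split
      · exact Nat.mod_eq_of_lt (by omega)
      · rw [Nat.mod_eq_sub_mod (by omega), Nat.mod_eq_of_lt (by omega)]
    have h2 : (a + (b + N - a) / 2) % N =
        if a + (b + N - a) / 2 < N then a + (b + N - a) / 2
        else a + (b + N - a) / 2 - N := by
      split
      · exact Nat.mod_eq_of_lt (by omega)
      · rw [Nat.mod_eq_sub_mod (by omega), Nat.mod_eq_of_lt (by omega)]
    rw [h2]
    split at hab <;> split <;> omega
end
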